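/- arXiv:1508.04315 — 6 statements merged into one kernel-verified Lean document; each statement's English description precedes it below -/
import Mathlib

section
/- The triple series ∑_{n₁=1}^∞ ∑_{n₂=1}^∞ ∑_{n₃=1}^∞ (n₁·n₂·n₃)/(n₁+n₂+n₃)! equals (31/120)·e. -/
/-!
Grouping the terms by `N = n₁ + n₂ + n₃` (zero indices contribute nothing, so all indices may run
over `ℕ`), the convolution identity `∑_{i+j=n} C(i,p) C(j,q) = C(n+1,p+q+1)` gives
`∑_{n₁+n₂+n₃=N} n₁ n₂ n₃ = C(N+2,5) = C(N,3) + 2 C(N,4) + C(N,5)`, and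
`∑_N C(N,k) / N! = e / k!`. Hence the sum is `e (1/6 + 2/24 + 1/120) = 31 e / 120`.
-/

open Finset Nat Real

theorem hasSum_of_hasSum_sum_antidiagonal {A : Type*} [AddCommMonoid A] [HasAntidiagonal A]
    {f : A × A → ℝ} (hf : 0 ≤ f) {s : ℝ} (h : HasSum (fun n ↦ ∑ p ∈ antidiagonal n, f p) s) :
    HasSum f s := by
  let e := HasAntidiagonal.sigmaAntidiagonalEquivProd (A := A)
  have hfiber (n : A) : ∑' p : antidiagonal n, f (e ⟨n, p⟩) = ∑ p ∈ antidiagonal n, f p :=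
    Finset.tsum_subtype _ f
  have hsum : Summable (f ∘ e) := (summable_sigma_of_nonneg fun _ ↦ hf _).2
    ⟨fun _ ↦ .of_finite, h.summable.congr fun n ↦ (hfiber n).symm⟩
  rw [← e.hasSum_iff]
  convert hsum.hasSum
  rw [hsum.tsum_sigma' fun _ ↦ .of_finite, ← h.tsum_eq]
  exact (tsum_congr hfiber).symm

theorem Nat.sum_antidiagonal_choose_mul_choose (n p q : ℕ) :
    ∑ ij ∈ antidiagonal n, ij.1.choose p * ij.2.choose q = (n + 1).choose (p + q + 1) := by
  induction n generalizing p with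
  | zero => cases p <;> cases q <;> simp [Nat.choose_eq_zero_of_lt]
  | succ n ih =>
    rw [Finset.Nat.sum_antidiagonal_succ]
    cases p with
    | zero =>
      have hsum := ih 0
      simp only [Nat.choose_zero_right, one_mul, zero_add] at hsum ⊢
      rw [hsum, ← Nat.choose_succ_succ']
    | succ p =>
      simp only [Nat.choose_succ_succ', add_mul, sum_add_distrib, ih]
      simp [add_right_comm, Nat.choose_succ_succ' n (p + q)]

theorem Nat.sum_antidiagonal_mul (m : ℕ) :
    ∑ ij ∈ antidiagonal m, ij.1 * ij.2 = (m + 1).choose 3 := by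
  simpa using Nat.sum_antidiagonal_choose_mul_choose m 1 1

theorem Nat.sum_antidiagonal_mul_choose_three (n : ℕ) :
    ∑ ij ∈ antidiagonal n, ij.1 * (ij.2 + 1).choose 3 = (n + 2).choose 5 := by
  have h1 := Nat.sum_antidiagonal_choose_mul_choose n 1 3
  have h2 := Nat.sum_antidiagonal_choose_mul_choose n 1 2
  simp only [Nat.choose_one_right] at h1 h2
  simp only [Nat.choose_succ_succ' _ 2, mul_add, sum_add_distrib, h1, h2,
    Nat.choose_succ_succ' (n + 1) 4]

theorem hasSum_choose_mul_pow_div_factorial (k : ℕ) (x : ℝ) :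
    HasSum (fun n ↦ (n.choose k : ℝ) * x ^ n / n !) (x ^ k / k ! * exp x) := by
  rw [← hasSum_nat_add_iff' k]
  have hlow : ∑ i ∈ range k, (i.choose k : ℝ) * x ^ i / i ! = 0 :=
    sum_eq_zero fun i hi ↦ by simp [Nat.choose_eq_zero_of_lt (mem_range.1 hi)]
  rw [hlow, sub_zero, exp_eq_exp_ℝ]
  refine ((NormedSpace.expSeries_div_hasSum_exp x).mul_left (x ^ k / k !)).congr_fun fun n ↦ ?_
  rw [add_comm n k, Nat.cast_add_choose, pow_add]
  field_simp

theorem hasSum_choose_add_two_five_div_factorial :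
    HasSum (fun n ↦ ((n + 2).choose 5 : ℝ) / n !) (31 / 120 * exp 1) := by
  have h (k : ℕ) := hasSum_choose_mul_pow_div_factorial k 1
  convert ((h 3).add ((h 4).mul_left 2)).add (h 5) using 1
  · funext n
    rw [Nat.choose_succ_succ' (n + 1) 4, Nat.choose_succ_succ' n 3, Nat.choose_succ_succ' n 4]
    push_cast
    ring
  · norm_num [Nat.factorial]
    ring

theorem sum_antidiagonal_mul_div_factorial (a m : ℕ) :
    ∑ p ∈ antidiagonal m, (a * p.1 * p.2 : ℝ) / (a + p.1 + p.2)! =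
      a * (m + 1).choose 3 / (a + m)! := by
  rw [← Nat.sum_antidiagonal_mul, Nat.cast_sum, mul_sum, sum_div]
  refine sum_congr rfl fun p hp ↦ ?_
  rw [add_assoc, mem_antidiagonal.1 hp]
  push_cast
  ring

theorem sum_antidiagonal_mul_choose_three_div_factorial (n : ℕ) :
    ∑ p ∈ antidiagonal n, (p.1 * (p.2 + 1).choose 3 : ℝ) / (p.1 + p.2)! =
      (n + 2).choose 5 / n ! := by
  rw [← Nat.sum_antidiagonal_mul_choose_three, Nat.cast_sum, sum_div]
  refine sum_congr rfl fun p hp ↦ ?_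
  rw [mem_antidiagonal.1 hp]
  push_cast
  ring

theorem stmt_2 :
    ∑' n₁ : ℕ+, ∑' n₂ : ℕ+, ∑' n₃ : ℕ+,
      ((n₁ : ℝ) * n₂ * n₃) / (Nat.factorial (n₁ + n₂ + n₃ : ℕ)) = (31 / 120) * Real.exp 1 := by
  have hpair : HasSum (fun p : ℕ × ℕ ↦ (p.1 * (p.2 + 1).choose 3 : ℝ) / (p.1 + p.2)!)
      (31 / 120 * exp 1) :=
    hasSum_of_hasSum_sum_antidiagonal (fun _ ↦ by positivity)
      (hasSum_choose_add_two_five_div_factorial.congr_fun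
        sum_antidiagonal_mul_choose_three_div_factorial)
  have hinner (a : ℕ) : HasSum (fun p : ℕ × ℕ ↦ (a * p.1 * p.2 : ℝ) / (a + p.1 + p.2)!)
      (∑' m, (a * (m + 1).choose 3 : ℝ) / (a + m)!) :=
    hasSum_of_hasSum_sum_antidiagonal (fun _ ↦ by positivity)
      ((hpair.summable.prod_factor a).hasSum.congr_fun (sum_antidiagonal_mul_div_factorial a))
  calc _ = ∑' a : ℕ, ∑' b : ℕ, ∑' c : ℕ, (a * b * c : ℝ) / (a + b + c)! := by
        rw [tsum_pnat_eq_tsum_of_eq_zero (f := fun a : ℕ ↦ ∑' n₂ : ℕ+, ∑' n₃ : ℕ+,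
          (a * n₂ * n₃ : ℝ) / (a + n₂ + n₃ : ℕ)!) (by simp)]
        refine tsum_congr fun a ↦ ?_
        rw [tsum_pnat_eq_tsum_of_eq_zero (f := fun b : ℕ ↦ ∑' n₃ : ℕ+,
          (a * b * n₃ : ℝ) / (a + b + n₃ : ℕ)!) (by simp)]
        exact tsum_congr fun b ↦
          tsum_pnat_eq_tsum_of_eq_zero (f := fun c : ℕ ↦ (a * b * c : ℝ) / (a + b + c)!) (by simp)
    _ = ∑' a : ℕ, ∑' m : ℕ, (a * (m + 1).choose 3 : ℝ) / (a + m)! :=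
        tsum_congr fun a ↦ ((hinner a).summable.tsum_prod).symm.trans (hinner a).tsum_eq
    _ = 31 / 120 * exp 1 := hpair.summable.tsum_prod.symm.trans hpair.tsum_eq
end

section
/- For integers 1 ≤ j ≤ k, the series S_{k,j} := ∑_{n₁=1}^∞ ⋯ ∑_{n_k=1}^∞ (n₁⋯n_j)/(n₁+⋯+n_k)! equals e · ∑_{i=0}^{j-1} C(j-1, i) / (k+j-i-1)!. -/
/-!
The weight `n` of a part with index `< j` is the coefficient of `X ^ n` in `X / (1 - X) ^ 2`,
and the constraint `n ≥ 1` on the remaining parts is encoded by `X / (1 - X)`. Grouping the tuples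
by their sum `s`, the weighted number of compositions of `s` is therefore the coefficient of `X ^ s`
in `X ^ k / (1 - X) ^ (k + j)`, namely `C(s + j - 1, k + j - 1)`. Vandermonde's identity splits this
into `∑ i, C(j - 1, i) * C(s, k + j - 1 - i)`, and `∑ s, C(s, m) / s! = e / m!`.
All rearrangements are carried out in `ℝ≥0∞`, where they need no summability.
-/

open Finset PowerSeries
open scoped ENNReal Nat

theorem ENNReal.tsum_prod_eq_tsum_sum_antidiagonal {A : Type*} [AddMonoid A] [HasAntidiagonal A]
    (F : A × A → ℝ≥0∞) :
    ∑' p : A × A, F p = ∑' s : A, ∑ p ∈ antidiagonal s, F p := by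
  rw [← (HasAntidiagonal.sigmaAntidiagonalEquivProd (A := A)).tsum_eq, ENNReal.tsum_sigma']
  exact tsum_congr fun s => Finset.tsum_subtype (antidiagonal s) F

theorem PowerSeries.tsum_prod_coeff_mul_apply_sum {k : ℕ} (f : Fin k → ℕ⟦X⟧) (g : ℕ → ℝ≥0∞) :
    ∑' n : Fin k → ℕ, (∏ i, ((coeff (n i) (f i) : ℕ) : ℝ≥0∞)) * g (∑ i, n i)
      = ∑' s, ((coeff s (∏ i, f i) : ℕ) : ℝ≥0∞) * g s := by
  induction k generalizing g with
  | zero =>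
    rw [tsum_eq_single 0 fun n hn => (hn (Subsingleton.elim n 0)).elim,
      tsum_eq_single 0 fun s hs => by simp [coeff_one, hs]]
    simp
  | succ k ih =>
    calc ∑' n : Fin (k + 1) → ℕ, (∏ i, ((coeff (n i) (f i) : ℕ) : ℝ≥0∞)) * g (∑ i, n i)
        = ∑' (a : ℕ) (n : Fin k → ℕ), ((coeff a (f 0) : ℕ) : ℝ≥0∞) *
            ((∏ i, ((coeff (n i) (f i.succ) : ℕ) : ℝ≥0∞)) * g (a + ∑ i, n i)) := by
          rw [← (Fin.consEquiv fun _ => ℕ).tsum_eq, ENNReal.tsum_prod']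
          simp [Fin.prod_univ_succ, Fin.sum_univ_succ, mul_assoc]
      _ = ∑' (a : ℕ) (b : ℕ), ((coeff a (f 0) : ℕ) : ℝ≥0∞) *
            (((coeff b (∏ i : Fin k, f i.succ) : ℕ) : ℝ≥0∞) * g (a + b)) :=
          tsum_congr fun a => by
            rw [ENNReal.tsum_mul_left, ENNReal.tsum_mul_left,
              ih (fun i => f i.succ) (fun b => g (a + b))]
      _ = ∑' s, ((coeff s (∏ i, f i) : ℕ) : ℝ≥0∞) * g s := by
          rw [← ENNReal.tsum_prod, ENNReal.tsum_prod_eq_tsum_sum_antidiagonal]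
          refine tsum_congr fun s => ?_
          rw [Fin.prod_univ_succ, coeff_mul, Nat.cast_sum, Finset.sum_mul]
          refine Finset.sum_congr rfl fun p hp => ?_
          rw [mem_antidiagonal.mp hp]
          push_cast
          ring

theorem tsum_pnat_tuple_eq_tsum_nat_tuple {ι α : Type*} [AddCommMonoid α] [TopologicalSpace α]
    (F : (ι → ℕ) → α) (hF : ∀ n i, n i = 0 → F n = 0) :
    ∑' n : ι → ℕ+, F (fun i => n i) = ∑' n : ι → ℕ, F n := by
  refine Function.Injective.tsum_eq (fun n n' h => funext fun i => PNat.coe_injective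
    (congrFun h i)) fun n hn => ⟨fun i => ⟨n i, Nat.pos_of_ne_zero fun h => hn (hF n i h)⟩, rfl⟩

theorem PowerSeries.coeff_mk_one_pow (d n : ℕ) :
    coeff n ((mk 1 : ℕ⟦X⟧) ^ (d + 1)) = (d + n).choose d := by
  have hmap : map (Nat.castRingHom ℤ) (mk 1 : ℕ⟦X⟧) = mk 1 := by ext; simp
  have h := congrArg (coeff n) (mk_one_pow_eq_mk_choose_add ℤ d)
  rw [coeff_mk, ← hmap, ← map_pow, coeff_map] at h
  exact Nat.cast_injective (R := ℤ) h

theorem PowerSeries.coeff_X_mul_mk_one_sq (m : ℕ) : coeff m (X * (mk 1 : ℕ⟦X⟧) ^ 2) = m := by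
  cases m with
  | zero => simp
  | succ m => rw [coeff_succ_X_mul, coeff_mk_one_pow, Nat.choose_one_right, add_comm]

theorem PowerSeries.coeff_X_mul_mk_one {m : ℕ} (hm : m ≠ 0) : coeff m (X * (mk 1 : ℕ⟦X⟧)) = 1 := by
  obtain ⟨m, rfl⟩ := Nat.exists_eq_succ_of_ne_zero hm
  simp [coeff_succ_X_mul]

theorem PowerSeries.coeff_prod_X_mul_mk_one_pow_ite {k j : ℕ} (hj : 1 ≤ j) (hjk : j ≤ k) (s : ℕ) :
    coeff s (∏ i : Fin k, X * (mk 1 : ℕ⟦X⟧) ^ (if (i : ℕ) < j then 2 else 1))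
      = (s + (j - 1)).choose (k + j - 1) := by
  have hexp : ∑ i : Fin k, (if (i : ℕ) < j then 2 else 1) = k + j - 1 + 1 := by
    have hsplit : ∀ i : Fin k, (if (i : ℕ) < j then 2 else 1) = 1 + if (i : ℕ) < j then 1 else 0 :=
      fun i => by split_ifs <;> rfl
    rw [sum_congr rfl fun i _ => hsplit i, sum_add_distrib, sum_boole, Fin.card_filter_val_lt]
    simp only [sum_const, card_univ, Fintype.card_fin, smul_eq_mul, mul_one, Nat.cast_id]
    omega
  rw [prod_mul_distrib, prod_const, card_univ, Fintype.card_fin, prod_pow_eq_pow_sum, hexp,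
    coeff_X_pow_mul']
  split_ifs with hks
  · rw [coeff_mk_one_pow]
    congr 1
    omega
  · rw [Nat.choose_eq_zero_of_lt (by omega)]

theorem Nat.add_choose_eq_sum_range (s u m : ℕ) (h : u ≤ m) :
    (s + u).choose m = ∑ i ∈ range (u + 1), u.choose i * s.choose (m - i) := by
  rw [add_comm, Nat.add_choose_eq, Nat.sum_antidiagonal_eq_sum_range_succ_mk]
  refine (sum_subset (range_subset_range.mpr (by omega)) fun i _ hi => ?_).symm
  rw [Nat.choose_eq_zero_of_lt (by simpa using hi), zero_mul]

theorem ENNReal.tsum_inv_factorial : ∑' n : ℕ, ((n ! : ℝ≥0∞))⁻¹ = ENNReal.ofReal (Real.exp 1) := by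
  rw [Real.exp_eq_exp_ℝ, NormedSpace.exp_eq_tsum_div, ENNReal.ofReal_tsum_of_nonneg
    (fun n => by positivity) (Real.summable_pow_div_factorial 1)]
  refine tsum_congr fun n => ?_
  rw [one_pow, one_div, ENNReal.ofReal_inv_of_pos (by positivity), ENNReal.ofReal_natCast]

theorem ENNReal.tsum_choose_div_factorial (m : ℕ) :
    ∑' s : ℕ, (s.choose m : ℝ≥0∞) / s ! = ENNReal.ofReal (Real.exp 1) / m ! := by
  have hsupp : Function.support (fun s : ℕ => (s.choose m : ℝ≥0∞) / s !)
      ⊆ Set.range (· + m) := fun s hs =>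
    ⟨s - m, Nat.sub_add_cancel (not_lt.mp fun h => hs (by simp [Nat.choose_eq_zero_of_lt h]))⟩
  rw [← (add_left_injective m).tsum_eq hsupp, ← ENNReal.tsum_inv_factorial, div_eq_mul_inv,
    ← ENNReal.tsum_mul_right]
  refine tsum_congr fun t => ?_
  rw [← Nat.add_choose_mul_factorial_mul_factorial t m, Nat.cast_mul, Nat.cast_mul]
  have hC : ((t + m).choose m : ℝ≥0∞) ≠ 0 := by
    exact_mod_cast (Nat.choose_pos (Nat.le_add_left m t)).ne'
  rw [mul_assoc, div_eq_mul_inv, ENNReal.mul_inv (.inl hC) (.inl (ENNReal.natCast_ne_top _)),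
    ← mul_assoc, ENNReal.mul_inv_cancel hC (ENNReal.natCast_ne_top _), one_mul,
    ENNReal.mul_inv (.inr (ENNReal.natCast_ne_top _)) (.inl (ENNReal.natCast_ne_top _))]

theorem ENNReal.tsum_add_choose_div_factorial {u m : ℕ} (h : u ≤ m) :
    ∑' s : ℕ, ((s + u).choose m : ℝ≥0∞) / s !
      = ENNReal.ofReal (Real.exp 1) * ∑ i ∈ range (u + 1), (u.choose i : ℝ≥0∞) / (m - i)! := by
  calc ∑' s : ℕ, ((s + u).choose m : ℝ≥0∞) / s !
      = ∑' s : ℕ, ∑ i ∈ range (u + 1), (u.choose i : ℝ≥0∞) * ((s.choose (m - i) : ℝ≥0∞) / s !) :=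
        tsum_congr fun s => by
          simp only [Nat.add_choose_eq_sum_range s u m h, Nat.cast_sum, Nat.cast_mul,
            div_eq_mul_inv, sum_mul, mul_assoc]
    _ = ∑ i ∈ range (u + 1), (u.choose i : ℝ≥0∞) * ∑' s : ℕ, (s.choose (m - i) : ℝ≥0∞) / s ! := by
        rw [Summable.tsum_finsetSum fun _ _ => ENNReal.summable]
        simp only [ENNReal.tsum_mul_left]
    _ = _ := by
        simp only [ENNReal.tsum_choose_div_factorial, mul_sum]
        exact sum_congr rfl fun i _ => by rw [div_eq_mul_inv, div_eq_mul_inv, mul_left_comm]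

theorem ENNReal.tsum_prod_div_factorial_sum {k j : ℕ} (hj : 1 ≤ j) (hjk : j ≤ k) :
    ∑' n : Fin k → ℕ+,
        (∏ i ∈ univ.filter (fun i : Fin k => (i : ℕ) < j), (n i : ℝ≥0∞)) / (∑ i, (n i : ℕ))!
      = ENNReal.ofReal (Real.exp 1) *
          ∑ i ∈ range j, ((j - 1).choose i : ℝ≥0∞) / (k + j - i - 1)! := by
  set f : Fin k → ℕ⟦X⟧ := fun i => X * PowerSeries.mk 1 ^ (if (i : ℕ) < j then 2 else 1)
  have hweight (n : Fin k → ℕ+) :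
      ∏ i ∈ univ.filter (fun i : Fin k => (i : ℕ) < j), (n i : ℝ≥0∞)
        = ∏ i, ((coeff (n i) (f i) : ℕ) : ℝ≥0∞) := by
    rw [prod_filter]
    refine prod_congr rfl fun i _ => ?_
    split_ifs <;> simp [f, *, coeff_X_mul_mk_one_sq, coeff_X_mul_mk_one]
  have hpos (n : Fin k → ℕ) (i : Fin k) (hi : n i = 0) :
      (∏ i, ((coeff (n i) (f i) : ℕ) : ℝ≥0∞)) * ((∑ i, n i)! : ℝ≥0∞)⁻¹ = 0 := by
    rw [prod_eq_zero (mem_univ i) (by rw [hi, coeff_zero_X_mul, Nat.cast_zero]), zero_mul]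
  calc _ = ∑' n : Fin k → ℕ, (∏ i, ((coeff (n i) (f i) : ℕ) : ℝ≥0∞)) * ((∑ i, n i)! : ℝ≥0∞)⁻¹ := by
        rw [← tsum_pnat_tuple_eq_tsum_nat_tuple _ hpos]
        simp only [hweight, div_eq_mul_inv]
    _ = ∑' s : ℕ, ((s + (j - 1)).choose (k + j - 1) : ℝ≥0∞) / s ! := by
        rw [PowerSeries.tsum_prod_coeff_mul_apply_sum f fun s => ((s ! : ℝ≥0∞))⁻¹]
        simp only [f, coeff_prod_X_mul_mk_one_pow_ite hj hjk, div_eq_mul_inv]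
    _ = _ := by
        rw [ENNReal.tsum_add_choose_div_factorial (by omega), Nat.sub_add_cancel hj]
        refine congrArg _ (sum_congr rfl fun i _ => ?_)
        rw [show k + j - 1 - i = k + j - i - 1 by omega]

theorem stmt_4 (k j : ℕ) (hj : 1 ≤ j) (hjk : j ≤ k) :
    ∑' n : Fin k → ℕ+,
        (∏ i ∈ Finset.univ.filter (fun i : Fin k => (i : ℕ) < j), (n i : ℝ)) /
          (Nat.factorial (∑ i, (n i : ℕ)))
      = Real.exp 1 *
          ∑ i ∈ Finset.range j, (Nat.choose (j - 1) i : ℝ) / (Nat.factorial (k + j - i - 1)) := by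
  have h := congrArg ENNReal.toReal (ENNReal.tsum_prod_div_factorial_sum hj hjk)
  rw [ENNReal.tsum_toReal_eq fun n => ENNReal.div_ne_top
      (ENNReal.prod_ne_top fun _ _ => ENNReal.natCast_ne_top _) (by positivity),
    ENNReal.toReal_mul, ENNReal.toReal_ofReal (Real.exp_pos 1).le,
    ENNReal.toReal_sum fun _ _ => ENNReal.div_ne_top (ENNReal.natCast_ne_top _) (by positivity)]
    at h
  simpa [ENNReal.toReal_div, ENNReal.toReal_prod] using h
end

section
/- For every positive integer k and pairwise distinct real numbers x₁, …, x_k, the multiple series ∑_{n₁=1}^∞ ⋯ ∑_{n_k=1}^∞ (x₁^{n₁}⋯x_k^{n_k})/(n₁+⋯+n_k)! equals x₁⋯x_k · [x₁,…,x_k; z ↦ z^{k-1}·exp_k(z)], where exp_k(z) = ∑_{n=0}^∞ z^n/(n+k)!. -/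
/-!
Writing `n i = m i + 1` and grouping the tuples `m` by their total degree `N`, the series becomes
`(∏ i, x i) * ∑ N, h_N(x) / (N + k)!`, where `h_N` is the complete homogeneous symmetric
polynomial. On the other side, `z ^ (k - 1) * exp_k z = ∑ N, z ^ (N + k - 1) / (N + k)!`, and the
divided difference of `z ^ (N + k - 1)` at `k` distinct nodes is `h_N(x)`: for `N = 0` it is `1`,
the coefficient of `z ^ (k - 1)` in the Lagrange interpolant, which is `z ^ (k - 1)` itself; and the
identity `[y, t; (z - y) g] = [t; g]` turns `z ^ (m + 1) = (z - y) z ^ m + y z ^ m` into the recursion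
`h_{N+1}(y, t) = h_{N+1}(t) + y h_N(y, t)`. Absolute convergence of the multiple series comes from
the same grouping applied to `|x|`, together with `h_N(|x|) ≤ (∑ i, |x i|) ^ N`.
-/

/-- Divided difference of `f` at the nodes `x 0, …, x (k-1)` (Lagrange form, which agrees
with the usual recursive definition when the nodes are pairwise distinct). -/
noncomputable def divDiff {k : ℕ} (x : Fin k → ℝ) (f : ℝ → ℝ) : ℝ :=
  ∑ i, f (x i) / ∏ j ∈ Finset.univ.erase i, (x i - x j)

/-- The `k`-th tail of the exponential series: `exp_k(z) = ∑_{n≥0} z^n/(n+k)!`. -/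
noncomputable def expTail (k : ℕ) (z : ℝ) : ℝ :=
  ∑' n : ℕ, z ^ n / (Nat.factorial (n + k))

open Finset Function
open scoped Nat

theorem Finset.Nat.sum_antidiagonalTuple_succ {M : Type*} [AddCommMonoid M] (k n : ℕ)
    (f : (Fin (k + 1) → ℕ) → M) :
    ∑ c ∈ Nat.antidiagonalTuple (k + 1) n, f c =
      ∑ p ∈ antidiagonal n, ∑ c ∈ Nat.antidiagonalTuple k p.2, f (Fin.cons p.1 c) := by
  rw [sum_sigma']
  refine sum_nbij' (fun c => ⟨(c 0, n - c 0), Fin.tail c⟩) (fun p => Fin.cons p.1.1 p.2)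
    ?_ ?_ ?_ ?_ ?_
  · intro c hc
    simp only [mem_sigma, HasAntidiagonal.mem_antidiagonal, Nat.mem_antidiagonalTuple,
      Fin.sum_univ_succ] at hc ⊢
    exact ⟨by omega, by simp only [Fin.tail]; omega⟩
  · rintro ⟨⟨a, b⟩, c⟩ h
    simp only [mem_sigma, HasAntidiagonal.mem_antidiagonal,
      Nat.mem_antidiagonalTuple] at h ⊢
    simp [h.1, h.2]
  · intro c _
    exact Fin.cons_self_tail c
  · rintro ⟨⟨a, b⟩, c⟩ h
    simp only [mem_sigma, HasAntidiagonal.mem_antidiagonal] at h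
    simp [← h.1]
  · intro c _
    simp

theorem Fin.prod_univ_erase_succ {M : Type*} [CommMonoid M] {k : ℕ} (f : Fin (k + 1) → M)
    (i : Fin k) : ∏ j ∈ univ.erase i.succ, f j = f 0 * ∏ j ∈ univ.erase i, f j.succ := by
  simp [← Finset.filter_ne', Finset.prod_filter, Fin.prod_univ_succ, (Fin.succ_ne_zero _).symm]

section CompleteHomogeneous

variable {R : Type*} [CommSemiring R] {k : ℕ}

def completeHomogeneous (x : Fin k → R) (n : ℕ) : R :=
  ∑ c ∈ Nat.antidiagonalTuple k n, ∏ i, x i ^ c i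

theorem completeHomogeneous_zero (x : Fin k → R) : completeHomogeneous x 0 = 1 := by
  simp [completeHomogeneous, Nat.antidiagonalTuple_zero_right]

theorem completeHomogeneous_fin_zero_succ (x : Fin 0 → R) (n : ℕ) :
    completeHomogeneous x (n + 1) = 0 := by
  simp [completeHomogeneous, Nat.antidiagonalTuple_zero_succ]

theorem completeHomogeneous_cons (y : R) (t : Fin k → R) (n : ℕ) :
    completeHomogeneous (Fin.cons y t : Fin (k + 1) → R) n =
      ∑ p ∈ antidiagonal n, y ^ p.1 * completeHomogeneous t p.2 := by
  simp only [completeHomogeneous, Nat.sum_antidiagonalTuple_succ, Fin.prod_univ_succ,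
    Fin.cons_zero, Fin.cons_succ, mul_sum]

theorem completeHomogeneous_cons_succ (y : R) (t : Fin k → R) (n : ℕ) :
    completeHomogeneous (Fin.cons y t : Fin (k + 1) → R) (n + 1) =
      completeHomogeneous t (n + 1) + y * completeHomogeneous (Fin.cons y t) n := by
  rw [completeHomogeneous_cons, completeHomogeneous_cons, Nat.sum_antidiagonal_succ, mul_sum]
  simp [pow_succ', mul_assoc]

theorem completeHomogeneous_le_pow_sum [PartialOrder R] [IsOrderedRing R] {x : Fin k → R}
    (hx : 0 ≤ x) (n : ℕ) : completeHomogeneous x n ≤ (∑ i, x i) ^ n := by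
  induction k generalizing n with
  | zero => cases n <;> simp [completeHomogeneous_zero, completeHomogeneous_fin_zero_succ]
  | succ k ih =>
    rw [← Fin.cons_self_tail x, completeHomogeneous_cons, Fin.sum_cons,
      (Commute.all _ _).add_pow']
    refine sum_le_sum fun p hp => ?_
    have hy : 0 ≤ x 0 := hx 0
    have ht : 0 ≤ Fin.tail x := fun i => hx i.succ
    calc x 0 ^ p.1 * completeHomogeneous (Fin.tail x) p.2
        ≤ x 0 ^ p.1 * (∑ i, Fin.tail x i) ^ p.2 := by gcongr; exact ih ht _
      _ ≤ n.choose p.1 • (x 0 ^ p.1 * (∑ i, Fin.tail x i) ^ p.2) := by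
        rw [nsmul_eq_mul]
        refine le_mul_of_one_le_left
          (mul_nonneg (pow_nonneg hy _) (pow_nonneg (sum_nonneg fun i _ => ht i) _)) ?_
        simpa using Nat.mono_cast (α := R) (Nat.choose_pos (HasAntidiagonal.antidiagonal.fst_le hp))

end CompleteHomogeneous

section DividedDifferences

variable {k : ℕ}

theorem divDiff_add (x : Fin k → ℝ) (f g : ℝ → ℝ) :
    divDiff x (fun z => f z + g z) = divDiff x f + divDiff x g := by
  simp only [divDiff, add_div, sum_add_distrib]

theorem divDiff_const_mul (x : Fin k → ℝ) (c : ℝ) (f : ℝ → ℝ) :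
    divDiff x (fun z => c * f z) = c * divDiff x f := by
  simp only [divDiff, mul_div_assoc, mul_sum]

theorem divDiff_tsum (x : Fin k → ℝ) (f : ℕ → ℝ → ℝ) (hf : ∀ i, Summable fun n => f n (x i)) :
    divDiff x (fun z => ∑' n, f n z) = ∑' n, divDiff x (f n) := by
  simp only [divDiff, ← tsum_div_const]
  exact (Summable.tsum_finsetSum fun i _ => (hf i).div_const _).symm

theorem divDiff_fin_zero (x : Fin 0 → ℝ) (f : ℝ → ℝ) : divDiff x f = 0 := by
  simp [divDiff]

theorem divDiff_pow_self (x : Fin (k + 1) → ℝ) (hx : Injective x) : divDiff x (· ^ k) = 1 := by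
  have := Lagrange.coeff_eq_sum (s := univ) hx.injOn (P := Polynomial.X ^ k)
    (by rw [Polynomial.degree_X_pow, card_univ, Fintype.card_fin]; exact_mod_cast k.lt_succ_self)
  simpa [divDiff] using this.symm

theorem divDiff_cons_sub_mul (y : ℝ) (t : Fin k → ℝ) (hy : ∀ i, t i ≠ y) (g : ℝ → ℝ) :
    divDiff (Fin.cons y t) (fun z => (z - y) * g z) = divDiff t g := by
  rw [divDiff, Fin.sum_univ_succ]
  simp only [Fin.cons_zero, sub_self, zero_mul, zero_div, zero_add, Fin.prod_univ_erase_succ,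
    Fin.cons_succ]
  exact sum_congr rfl fun i _ => mul_div_mul_left _ _ (sub_ne_zero.2 (hy i))

theorem divDiff_cons_pow_succ (y : ℝ) (t : Fin k → ℝ) (hy : ∀ i, t i ≠ y) (m : ℕ) :
    divDiff (Fin.cons y t) (· ^ (m + 1)) =
      divDiff t (· ^ m) + y * divDiff (Fin.cons y t) (· ^ m) := by
  rw [← divDiff_cons_sub_mul y t hy, ← divDiff_const_mul, ← divDiff_add]
  congr 1
  funext z
  ring

theorem divDiff_pow_add_card (x : Fin k → ℝ) (hx : Injective x) (n : ℕ) :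
    divDiff x (· ^ (n + k)) = completeHomogeneous x (n + 1) := by
  induction k generalizing n with
  | zero => rw [divDiff_fin_zero, completeHomogeneous_fin_zero_succ]
  | succ k ih =>
    obtain ⟨y, t, rfl⟩ : ∃ y t, x = Fin.cons y t := ⟨x 0, Fin.tail x, (Fin.cons_self_tail x).symm⟩
    have ht : Injective t := (Fin.cons_injective_iff.1 hx).2
    have hy : ∀ i, t i ≠ y := fun i h => (Fin.cons_injective_iff.1 hx).1 ⟨i, h⟩
    induction n with
    | zero =>
      have hpow : divDiff t (· ^ k) = completeHomogeneous t 1 := by simpa using ih t ht 0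
      rw [zero_add, divDiff_cons_pow_succ y t hy, hpow, divDiff_pow_self _ hx,
        completeHomogeneous_cons_succ, completeHomogeneous_zero]
    | succ n ihn =>
      rw [show n + 1 + (k + 1) = n + 1 + k + 1 by ring, divDiff_cons_pow_succ y t hy, ih t ht,
        show n + 1 + k = n + (k + 1) by ring, ihn, ← completeHomogeneous_cons_succ]

theorem divDiff_pow_add (x : Fin (k + 1) → ℝ) (hx : Injective x) (n : ℕ) :
    divDiff x (· ^ (n + k)) = completeHomogeneous x n := by
  cases n with
  | zero => rw [zero_add, divDiff_pow_self x hx, completeHomogeneous_zero]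
  | succ n => rw [show n + 1 + k = n + (k + 1) by ring, divDiff_pow_add_card x hx]

end DividedDifferences

theorem summable_pow_div_factorial_add (z : ℝ) (k : ℕ) :
    Summable fun n : ℕ => z ^ n / (n + k)! := by
  refine .of_norm_bounded (Real.summable_pow_div_factorial |z|) fun n => ?_
  rw [norm_div, norm_pow, Real.norm_eq_abs, RCLike.norm_natCast]
  gcongr
  exact Nat.le_add_right n k

theorem divDiff_pow_mul_expTail {k : ℕ} (x : Fin (k + 1) → ℝ) (hx : Injective x) :
    divDiff x (fun z => z ^ k * expTail (k + 1) z) =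
      ∑' n, completeHomogeneous x n / (n + (k + 1))! := by
  have hseries : ∀ z, z ^ k * expTail (k + 1) z = ∑' n, ((n + (k + 1))! : ℝ)⁻¹ * z ^ (n + k) := by
    intro z
    rw [expTail, ← tsum_mul_left]
    exact tsum_congr fun n => by ring
  simp_rw [hseries]
  rw [divDiff_tsum]
  · simp_rw [divDiff_const_mul, divDiff_pow_add x hx, inv_mul_eq_div]
  · intro i
    refine ((summable_pow_div_factorial_add (x i) (k + 1)).mul_left (x i ^ k)).congr fun n => ?_
    ring

section MultipleSeries

variable {k : ℕ}

theorem tsum_eq_tsum_sum_antidiagonalTuple {E : Type*} [NormedAddCommGroup E] [CompleteSpace E]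
    {f : (Fin k → ℕ) → E} (hf : Summable f) :
    ∑' m, f m = ∑' N, ∑ c ∈ Nat.antidiagonalTuple k N, f c := by
  let e := Nat.sigmaAntidiagonalTupleEquivTuple k
  rw [← e.tsum_eq]
  exact (e.summable_iff.2 hf).tsum_sigma.trans (tsum_congr fun N => Finset.tsum_subtype _ f)

theorem sum_antidiagonalTuple_prod_pow_succ_div_factorial (x : Fin k → ℝ) (N : ℕ) :
    ∑ c ∈ Nat.antidiagonalTuple k N, (∏ i, x i ^ (c i + 1)) / ((∑ i, (c i + 1))! : ℝ) =
      (∏ i, x i) * (completeHomogeneous x N / (N + k)!) := by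
  rw [completeHomogeneous, sum_div, mul_sum]
  refine sum_congr rfl fun c hc => ?_
  have hdeg : ∑ i, (c i + 1) = N + k := by
    simp [sum_add_distrib, Nat.mem_antidiagonalTuple.1 hc]
  rw [hdeg, mul_div_assoc', ← prod_mul_distrib]
  simp only [pow_succ']

theorem summable_prod_pow_succ_div_factorial (x : Fin k → ℝ) :
    Summable fun m : Fin k → ℕ => (∏ i, x i ^ (m i + 1)) / ((∑ i, (m i + 1))! : ℝ) := by
  let g : (Fin k → ℕ) → ℝ := fun m => (∏ i, |x i| ^ (m i + 1)) / ((∑ i, (m i + 1))! : ℝ)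
  have hg : ∀ m, 0 ≤ g m := fun m => by positivity
  refine .of_norm_bounded (g := g) ?_ fun m => by simp [g, norm_prod]
  let e := Nat.sigmaAntidiagonalTupleEquivTuple k
  refine e.summable_iff.1 ((summable_sigma_of_nonneg fun p => hg (e p)).2
    ⟨fun N => .of_finite, .of_nonneg_of_le (fun N => tsum_nonneg fun c => hg c) (fun N => ?_)
      ((Real.summable_pow_div_factorial (∑ i, |x i|)).mul_left (∏ i, |x i|))⟩)
  change ∑' c : Nat.antidiagonalTuple k N, g c ≤ _
  rw [Finset.tsum_subtype (Nat.antidiagonalTuple k N) g,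
    sum_antidiagonalTuple_prod_pow_succ_div_factorial]
  gcongr
  · exact completeHomogeneous_le_pow_sum (fun i => abs_nonneg (x i)) N
  · exact Nat.le_add_right N k

end MultipleSeries

theorem stmt_13 (k : ℕ) (hk : 1 ≤ k) (x : Fin k → ℝ) (hx : Function.Injective x) :
    ∑' n : Fin k → ℕ+,
        (∏ i, x i ^ (n i : ℕ)) / (Nat.factorial (∑ i, (n i : ℕ)))
      = (∏ i, x i) * divDiff x (fun z => z ^ (k - 1) * expTail k z) := by
  obtain ⟨k, rfl⟩ : ∃ k', k = k' + 1 := ⟨k - 1, by omega⟩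
  rw [Nat.add_sub_cancel, divDiff_pow_mul_expTail x hx, ← tsum_mul_left,
    ← (Equiv.piCongrRight fun _ => Equiv.pnatEquivNat.symm).tsum_eq]
  exact (tsum_eq_tsum_sum_antidiagonalTuple (summable_prod_pow_succ_div_factorial x)).trans
    (tsum_congr (sum_antidiagonalTuple_prod_pow_succ_div_factorial x))
end

section
/- The series ∑_{n₁=1}^∞ ∑_{n₂=1}^∞ ∑_{n₃=1}^∞ (n₁·n₂)/(n₁+n₂+n₃)! equals (5/24)·e. -/
/-!
Shift every index down by one, so the summand becomes `(a+1)(b+1)/(a+b+c+3)!` over `ℕ³`.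
The terms are nonnegative, so they may be regrouped by `N = a+b+c`; by the upper
Chu–Vandermonde identity the weights in each group add up to `C(N+4, 4)`, and
`C(N+4, 4)/(N+3)! = (N + 4)/(24 N!)`, whose sum over `N` is `(e + 4e)/24`.
-/

open Finset
open scoped Nat

theorem Nat.sum_antidiagonal_add_choose_mul_add_choose (p q n : ℕ) :
    ∑ ij ∈ antidiagonal n, (ij.1 + p).choose p * (ij.2 + q).choose q =
      (n + p + q + 1).choose (p + q + 1) := by
  induction p generalizing n with
  | zero =>
    induction n with
    | zero => simp
    | succ n ih =>
      simp only [Nat.sum_antidiagonal_succ, Nat.choose_zero_right, one_mul, add_zero, zero_add] at ih ⊢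
      rw [ih, show n + 1 + q + 1 = n + q + 1 + 1 by omega, Nat.choose_succ_succ' (n + q + 1),
        show n + 1 + q = n + q + 1 by omega]
  | succ p ihp =>
    induction n with
    | zero => simp
    | succ n ihn =>
      calc ∑ ij ∈ antidiagonal (n + 1), (ij.1 + (p + 1)).choose (p + 1) * (ij.2 + q).choose q
          = ∑ ij ∈ antidiagonal (n + 1), (ij.1 + p).choose p * (ij.2 + q).choose q +
              ∑ ij ∈ antidiagonal n, (ij.1 + (p + 1)).choose (p + 1) * (ij.2 + q).choose q := by
            simp only [Nat.sum_antidiagonal_succ, show ∀ i, i + 1 + (p + 1) = i + 1 + p + 1 by omega,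
              Nat.choose_succ_succ', add_mul, sum_add_distrib, zero_add, Nat.choose_self,
              Nat.choose_succ_self, add_zero,
              show ∀ i, i + 1 + p = i + (p + 1) by omega]
            ring
        _ = (n + 1 + (p + 1) + q + 1).choose (p + 1 + q + 1) := by
            rw [ihp, ihn, show n + 1 + (p + 1) + q + 1 = n + p + q + 2 + 1 by omega,
              show p + 1 + q + 1 = p + q + 1 + 1 by omega, Nat.choose_succ_succ' (n + p + q + 2)]
            ring_nf

theorem hasSum_of_hasSum_sum_partition_of_nonneg {β γ : Type*} {f : β → ℝ} {s : ℝ}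
    (t : γ → Finset β) (ht : ∀ b, ∃! c, b ∈ t c) (hf : 0 ≤ f)
    (h : HasSum (fun c => ∑ b ∈ t c, f b) s) : HasSum f s := by
  have hfib (c : γ) : HasSum (fun b : (t c : Set β) => f b) (∑ b ∈ t c, f b) := (t c).hasSum f
  have hsum : Summable f := (summable_partition hf ht).2
    ⟨fun c => (hfib c).summable, by simpa only [(hfib _).tsum_eq] using h.summable⟩
  have hsigma := (((Set.sigmaEquiv _ ht).hasSum_iff).2 hsum.hasSum).sigma hfib
  exact hsigma.unique h ▸ hsum.hasSum

theorem hasSum_add_four_choose_div_factorial :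
    HasSum (fun n : ℕ => ((n + 4).choose 4 : ℝ) / (n + 3)!) (5 / 24 * Real.exp 1) := by
  have he : HasSum (fun n : ℕ => 1 / (n ! : ℝ)) (Real.exp 1) := by
    simpa [Real.exp_eq_exp_ℝ] using NormedSpace.expSeries_div_hasSum_exp (1 : ℝ)
  have hne : HasSum (fun n : ℕ => (n : ℝ) / n !) (Real.exp 1) := by
    have hshift (n : ℕ) : ((n : ℝ) + 1) / (n + 1)! = (n ! : ℝ)⁻¹ := by
      rw [Nat.factorial_succ]
      push_cast
      field_simp
    rw [← hasSum_nat_add_iff' 1]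
    simpa [hshift] using he
  have hterm (n : ℕ) : ((n + 4).choose 4 : ℝ) / (n + 3)! = (n / n ! + 4 * (1 / n !)) / 24 := by
    rw [Nat.cast_choose ℝ (Nat.le_add_left 4 n), Nat.add_sub_cancel, Nat.factorial_succ (n + 3)]
    push_cast
    field_simp
    ring
  simp_rw [hterm]
  rw [show 5 / 24 * Real.exp 1 = (Real.exp 1 + 4 * Real.exp 1) / 24 by ring]
  exact (hne.add (he.mul_left 4)).div_const 24

theorem hasSum_succ_mul_choose_div_factorial :
    HasSum (fun x : ℕ × ℕ => ((x.1 + 1) * (x.2 + 2).choose 2 : ℝ) / (x.1 + x.2 + 3)!)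
      (5 / 24 * Real.exp 1) := by
  refine hasSum_of_hasSum_sum_partition_of_nonneg antidiagonal
    (fun x => ⟨x.1 + x.2, by simp, fun n hn => (mem_antidiagonal.1 hn).symm⟩) (fun x => by positivity) ?_
  convert hasSum_add_four_choose_div_factorial using 2 with n
  calc ∑ x ∈ antidiagonal n, ((x.1 + 1) * (x.2 + 2).choose 2 : ℝ) / (x.1 + x.2 + 3)!
      = (∑ x ∈ antidiagonal n, ((x.1 + 1) * (x.2 + 2).choose 2 : ℕ)) / (n + 3)! := by
        rw [Nat.cast_sum, sum_div]
        refine sum_congr rfl fun x hx => ?_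
        rw [mem_antidiagonal.1 hx]
        push_cast
        rfl
    _ = ((n + 4).choose 4 : ℝ) / (n + 3)! := by
        have := Nat.sum_antidiagonal_add_choose_mul_add_choose 1 2 n
        simp only [Nat.choose_one_right] at this
        rw [this]

theorem hasSum_succ_mul_succ_div_factorial :
    HasSum (fun x : ℕ × ℕ × ℕ => ((x.1 + 1) * (x.2.1 + 1) : ℝ) / (x.1 + x.2.1 + x.2.2 + 3)!)
      (5 / 24 * Real.exp 1) := by
  refine hasSum_of_hasSum_sum_partition_of_nonneg (fun y : ℕ × ℕ => {y.1} ×ˢ antidiagonal y.2)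
    (fun x => ⟨(x.1, x.2.1 + x.2.2), by simp, fun y hy => ?_⟩) (fun x => by positivity) ?_
  · simp only [mem_product, mem_singleton, HasAntidiagonal.mem_antidiagonal] at hy
    exact Prod.ext hy.1.symm hy.2.symm
  convert hasSum_succ_mul_choose_div_factorial using 2 with y
  calc ∑ x ∈ {y.1} ×ˢ antidiagonal y.2, ((x.1 + 1) * (x.2.1 + 1) : ℝ) / (x.1 + x.2.1 + x.2.2 + 3)!
      = (y.1 + 1) * (∑ x ∈ antidiagonal y.2, (x.1 + 1 : ℕ)) / (y.1 + y.2 + 3)! := by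
        rw [sum_product, sum_singleton, Nat.cast_sum, mul_sum, sum_div]
        refine sum_congr rfl fun x hx => ?_
        rw [add_assoc y.1, mem_antidiagonal.1 hx]
        push_cast
        rfl
    _ = ((y.1 + 1) * (y.2 + 2).choose 2 : ℝ) / (y.1 + y.2 + 3)! := by
        have := Nat.sum_antidiagonal_add_choose_mul_add_choose 1 0 y.2
        simp only [Nat.choose_one_right, Nat.choose_zero_right, mul_one] at this
        rw [this]

theorem stmt_15 :
    ∑' n₁ : ℕ+, ∑' n₂ : ℕ+, ∑' n₃ : ℕ+,
      ((n₁ : ℝ) * n₂) / (Nat.factorial (n₁ + n₂ + n₃ : ℕ)) = (5 / 24) * Real.exp 1 := by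
  have h := hasSum_succ_mul_succ_div_factorial
  have hs := h.summable
  simp only [← Equiv.pnatEquivNat.symm.tsum_eq, Equiv.pnatEquivNat_symm_apply, Nat.succPNat_coe]
  rw [← h.tsum_eq, hs.tsum_prod' hs.prod_factor]
  refine tsum_congr fun a => ?_
  rw [(hs.prod_factor a).tsum_prod' (hs.prod_factor a).prod_factor]
  refine tsum_congr fun b => tsum_congr fun c => ?_
  rw [show a.succ + b.succ + c.succ = a + b + c + 3 by omega]
  push_cast
  rfl
end

section
/- The quintuple series ∑_{n₁=1}^∞ ⋯ ∑_{n₅=1}^∞ (n₁⋯n₅)/(n₁+⋯+n₅)! equals (787/51840)·e. -/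
/-!
Write `T g m = ∑_{n ≥ 1} n g(m + n)` (`weightedShiftSum`). Pulling the factors `nᵢ` out of the
inner sums shows that the quintuple series is `T⁵ g 0` for `g u = 1 / u!`. In `ℝ≥0∞` the sums may
be interchanged freely, and `T (∑_t C(t + j, r) g(· + t)) = ∑_s C(s + j + 1, r + 2) g(· + s)` by
an upper Vandermonde identity, so `T⁵ g 0 = ∑_t C(t + 4, 9) / t!`. Vandermonde's identity splits
`C(t + 4, 9)` into `∑ C(4, j) C(t, 9 - j)`, and `∑_t C(t, i) / t! = e / i!` gives
`e (1/5! + 4/6! + 6/7! + 4/8! + 1/9!) = 787 e / 51840`. The value is finite, which is what lets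
`toReal` pass through the iterated sums back to `ℝ`.
-/

open Finset
open scoped ENNReal Nat

section UpperVandermonde

variable {j r : ℕ}

theorem sum_antidiagonal_add_choose_right (h : j < r) (s : ℕ) :
    ∑ p ∈ antidiagonal s, (p.2 + j).choose r = (s + j + 1).choose (r + 1) := by
  induction s with
  | zero => simp [Nat.choose_eq_zero_of_lt, h, Nat.succ_lt_succ h]
  | succ s ih =>
    rw [Nat.sum_antidiagonal_succ, ih, Nat.choose_succ_succ' (s + 1 + j), add_right_comm s 1 j]

theorem sum_antidiagonal_mul_add_choose_right (h : j < r) (s : ℕ) :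
    ∑ p ∈ antidiagonal s, p.1 * (p.2 + j).choose r = (s + j + 1).choose (r + 2) := by
  induction s with
  | zero => simp [Nat.choose_eq_zero_of_lt (by omega : j + 1 < r + 2)]
  | succ s ih =>
    simp only [Nat.sum_antidiagonal_succ, zero_mul, zero_add, add_one_mul, sum_add_distrib, ih,
      sum_antidiagonal_add_choose_right h]
    rw [Nat.choose_succ_succ' (s + 1 + j), add_right_comm s 1 j, add_comm]

end UpperVandermonde

theorem ENNReal.tsum_prod_eq_tsum_sum_antidiagonal_s17 (f : ℕ × ℕ → ℝ≥0∞) :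
    ∑' p, f p = ∑' n, ∑ p ∈ antidiagonal n, f p := by
  rw [← HasAntidiagonal.sigmaAntidiagonalEquivProd.tsum_eq, ENNReal.tsum_sigma']
  exact tsum_congr fun n => Finset.tsum_subtype (antidiagonal n) f

noncomputable def weightedShiftSum {R : Type*} [Semiring R] [TopologicalSpace R]
    (g : ℕ → R) (m : ℕ) : R :=
  ∑' n : ℕ+, ((n : ℕ) : R) * g (m + n)

theorem weightedShiftSum_eq_tsum_nat {R : Type*} [Semiring R] [TopologicalSpace R]
    (g : ℕ → R) (m : ℕ) : weightedShiftSum g m = ∑' n : ℕ, (n : R) * g (m + n) :=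
  tsum_pnat_eq_tsum_of_eq_zero (f := fun n : ℕ => (n : R) * g (m + n)) (by simp)

theorem weightedShiftSum_tsum_add_choose {j r : ℕ} (h : j < r) (g : ℕ → ℝ≥0∞) (m : ℕ) :
    weightedShiftSum (fun u => ∑' t, ((t + j).choose r : ℝ≥0∞) * g (u + t)) m
      = ∑' s, ((s + j + 1).choose (r + 2) : ℝ≥0∞) * g (m + s) := by
  rw [weightedShiftSum_eq_tsum_nat]
  calc ∑' n : ℕ, (n : ℝ≥0∞) * ∑' t, ((t + j).choose r : ℝ≥0∞) * g (m + n + t)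
      = ∑' p : ℕ × ℕ, ((p.1 * (p.2 + j).choose r : ℕ) : ℝ≥0∞) * g (m + (p.1 + p.2)) := by
        rw [ENNReal.tsum_prod']
        refine tsum_congr fun n => ?_
        rw [← ENNReal.tsum_mul_left]
        refine tsum_congr fun t => ?_
        rw [Nat.cast_mul, mul_assoc, add_assoc]
    _ = ∑' s, ((s + j + 1).choose (r + 2) : ℝ≥0∞) * g (m + s) := by
        rw [ENNReal.tsum_prod_eq_tsum_sum_antidiagonal_s17]
        refine tsum_congr fun s => ?_
        rw [← sum_antidiagonal_mul_add_choose_right h, Nat.cast_sum, sum_mul]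
        exact sum_congr rfl fun p hp => by rw [mem_antidiagonal.mp hp]

theorem iterate_weightedShiftSum (g : ℕ → ℝ≥0∞) (j : ℕ) :
    weightedShiftSum^[j + 1] g
      = fun m => ∑' t, ((t + j).choose (2 * j + 1) : ℝ≥0∞) * g (m + t) := by
  induction j with
  | zero =>
    funext m
    simp [weightedShiftSum_eq_tsum_nat]
  | succ j ih =>
    funext m
    rw [Function.iterate_succ_apply', ih, weightedShiftSum_tsum_add_choose (by omega)]
    rfl

theorem ne_top_of_weightedShiftSum_ne_top {g : ℕ → ℝ≥0∞} {m : ℕ}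
    (h : weightedShiftSum g m ≠ ⊤) (n : ℕ+) : g (m + n) ≠ ⊤ := by
  intro hg
  apply ENNReal.ne_top_of_tsum_ne_top h n
  rw [hg, ENNReal.mul_top (Nat.cast_ne_zero.mpr n.ne_zero)]

theorem toReal_weightedShiftSum {g : ℕ → ℝ≥0∞} {m : ℕ} (hg : ∀ n : ℕ+, g (m + n) ≠ ⊤) :
    (weightedShiftSum g m).toReal = weightedShiftSum (fun u => (g u).toReal) m := by
  rw [weightedShiftSum, ENNReal.tsum_toReal_eq fun n => ENNReal.mul_ne_top (by simp) (hg n)]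
  exact tsum_congr fun n => by rw [ENNReal.toReal_mul, ENNReal.toReal_natCast]

theorem toReal_iterate_weightedShiftSum {g : ℕ → ℝ≥0∞} (j : ℕ) {m : ℕ}
    (h : weightedShiftSum^[j] g m ≠ ⊤) :
    (weightedShiftSum^[j] g m).toReal = weightedShiftSum^[j] (fun u => (g u).toReal) m := by
  induction j generalizing m with
  | zero => rfl
  | succ j ih =>
    rw [Function.iterate_succ_apply'] at h ⊢
    rw [Function.iterate_succ_apply',
      toReal_weightedShiftSum (ne_top_of_weightedShiftSum_ne_top h)]
    exact tsum_congr fun n => congrArg _ (ih (ne_top_of_weightedShiftSum_ne_top h n))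

theorem hasSum_choose_mul_pow_div_factorial_s17 (i : ℕ) (x : ℝ) :
    HasSum (fun t => (t.choose i : ℝ) * x ^ t / t !) (x ^ i / i ! * Real.exp x) := by
  rw [← hasSum_nat_add_iff' i, sum_eq_zero fun t ht => by
    simp [Nat.choose_eq_zero_of_lt (mem_range.mp ht)], sub_zero]
  have hexp := (NormedSpace.expSeries_div_hasSum_exp x).mul_left (x ^ i / i !)
  rw [← Real.exp_eq_exp_ℝ] at hexp
  refine hexp.congr_fun fun m => ?_
  have hchoose : ((m + i).choose i : ℝ) ≠ 0 := by
    exact_mod_cast (Nat.choose_pos (Nat.le_add_left i m)).ne'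
  rw [← Nat.add_choose_mul_factorial_mul_factorial m i]
  push_cast
  field_simp
  ring

theorem hasSum_add_choose_mul_pow_div_factorial (k n : ℕ) (x : ℝ) :
    HasSum (fun t => ((t + k).choose n : ℝ) * x ^ t / t !)
      (∑ p ∈ antidiagonal n, (k.choose p.2 : ℝ) * (x ^ p.1 / p.1 ! * Real.exp x)) := by
  simp_rw [Nat.add_choose_eq, Nat.cast_sum, sum_mul, sum_div]
  refine hasSum_sum fun p _ => ?_
  refine ((hasSum_choose_mul_pow_div_factorial_s17 p.1 x).mul_left (k.choose p.2 : ℝ)).congr_fun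
    fun t => ?_
  push_cast
  ring

theorem hasSum_add_four_choose_nine_div_factorial :
    HasSum (fun t => ((t + 4).choose 9 : ℝ) / t !) (787 / 51840 * Real.exp 1) := by
  have h := hasSum_add_choose_mul_pow_div_factorial 4 9 1
  have hvalue :
      ∑ p ∈ antidiagonal 9, ((4 : ℕ).choose p.2 : ℝ) * ((1 : ℝ) ^ p.1 / p.1 ! * Real.exp 1)
        = 787 / 51840 * Real.exp 1 := by
    simp [Nat.sum_antidiagonal_eq_sum_range_succ_mk, sum_range_succ, Nat.factorial, Nat.choose]
    ring
  rw [hvalue] at h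
  simpa using h

theorem stmt_17 :
    ∑' n₁ : ℕ+, ∑' n₂ : ℕ+, ∑' n₃ : ℕ+, ∑' n₄ : ℕ+, ∑' n₅ : ℕ+,
      ((n₁ : ℝ) * n₂ * n₃ * n₄ * n₅) / (Nat.factorial (n₁ + n₂ + n₃ + n₄ + n₅ : ℕ))
      = (787 / 51840) * Real.exp 1 := by
  have hsum := hasSum_add_four_choose_nine_div_factorial
  have hval : weightedShiftSum^[5] (fun u => ((u ! : ℝ≥0∞))⁻¹) 0
      = ENNReal.ofReal (787 / 51840 * Real.exp 1) := by
    rw [iterate_weightedShiftSum, ← hsum.tsum_eq,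
      ENNReal.ofReal_tsum_of_nonneg (fun t => by positivity) hsum.summable]
    refine tsum_congr fun t => ?_
    rw [zero_add, div_eq_mul_inv, ENNReal.ofReal_mul (by positivity), ENNReal.ofReal_natCast,
      ENNReal.ofReal_inv_of_pos (by positivity), ENNReal.ofReal_natCast]
  rw [← ENNReal.toReal_ofReal (by positivity : 0 ≤ 787 / 51840 * Real.exp 1), ← hval,
    toReal_iterate_weightedShiftSum 5 (hval ▸ ENNReal.ofReal_ne_top)]
  simp only [Function.iterate_succ, Function.iterate_zero, Function.comp_apply, id,
    weightedShiftSum, zero_add, ENNReal.toReal_inv, ENNReal.toReal_natCast, div_eq_mul_inv,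
    mul_assoc, tsum_mul_left]
end

section
/- For every positive integer k, the series S_k := ∑_{n₁=1}^∞ ⋯ ∑_{n_k=1}^∞ (n₁⋯n_k)/(n₁+⋯+n_k)! equals (1/(2k-1)!) times the (2k-1)-st derivative of x ↦ x^{k-1} e^x evaluated at x = 1. -/
/-!
Grouping the tuples by `s = n₁ + ⋯ + n_k`, the inner sum `∑ n₁⋯n_k` is the coefficient of `x^s`
in `(x/(1-x)²)^k`, namely `C(s+k-1, 2k-1)`, so `S_k = ∑ₛ C(s+k-1, 2k-1)/s!`. Vandermonde splits
`C(s+k-1, 2k-1) = ∑_{i+j=2k-1} C(k-1,i) C(s,j)` and `∑ₛ C(s,j)/s! = e/j!`, while the Leibniz rule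
gives the same value `e ∑_{i+j=2k-1} C(k-1,i)/j!` for the normalised derivative of `x^{k-1} eˣ`
at `1`.
-/

open Finset

namespace Finset.Nat

theorem sum_antidiagonalTuple_succ_s19 {M : Type*} [AddCommMonoid M] (k n : ℕ)
    (f : (Fin (k + 1) → ℕ) → M) :
    ∑ x ∈ antidiagonalTuple (k + 1) n, f x =
      ∑ p ∈ antidiagonal n, ∑ x ∈ antidiagonalTuple k p.2, f (Fin.cons p.1 x) := by
  rw [sum_sigma']
  refine sum_bij' (fun x _ => ⟨(x 0, ∑ i, Fin.tail x i), Fin.tail x⟩)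
    (fun y _ => Fin.cons y.1.1 y.2) ?_ ?_ ?_ ?_ ?_
  · intro x hx
    simp_all [mem_antidiagonalTuple, Fin.sum_univ_succ, Fin.tail]
  · rintro ⟨⟨a, b⟩, y⟩ h
    simp_all [mem_antidiagonalTuple, Fin.sum_univ_succ]
  · intro x _
    simp
  · rintro ⟨⟨a, b⟩, y⟩ h
    simp_all [mem_antidiagonalTuple]
  · intro x _
    simp

theorem sum_antidiagonal_add_choose {k m : ℕ} (h : k ≤ m) (s : ℕ) :
    ∑ p ∈ antidiagonal s, (p.2 + k).choose m = (s + k + 1).choose (m + 1) := by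
  induction s with
  | zero => rcases h.eq_or_lt with rfl | hlt <;> simp [Nat.choose_eq_zero_of_lt, *]
  | succ s ih =>
    rw [sum_antidiagonal_succ, ih, Nat.add_right_comm s 1 k, Nat.choose_succ_succ (s + k + 1)]

theorem sum_antidiagonal_mul_add_choose {k m : ℕ} (h : k ≤ m) (s : ℕ) :
    ∑ p ∈ antidiagonal s, p.1 * (p.2 + k).choose m = (s + k + 1).choose (m + 2) := by
  induction s with
  | zero => simp [Nat.choose_eq_zero_of_lt, h]
  | succ s ih =>
    simp only [sum_antidiagonal_succ, add_mul, one_mul, sum_add_distrib, ih,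
      sum_antidiagonal_add_choose h, zero_mul, zero_add]
    rw [Nat.add_right_comm s 1 k, Nat.choose_succ_succ (s + k + 1), add_comm]

theorem sum_antidiagonalTuple_prod (k s : ℕ) :
    ∑ x ∈ antidiagonalTuple (k + 1) s, ∏ i, x i = (s + k).choose (2 * k + 1) := by
  induction k generalizing s with
  | zero => simp
  | succ k ih =>
    simp only [sum_antidiagonalTuple_succ_s19, Fin.prod_cons, ← mul_sum, ih]
    rw [sum_antidiagonal_mul_add_choose (by omega)]
    ring_nf

end Finset.Nat

theorem hasSum_sigma_of_nonneg {β : Type*} {γ : β → Type*} {f : (Σ b, γ b) → ℝ}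
    (hf : ∀ x, 0 ≤ f x) (hfib : ∀ b, Summable fun c => f ⟨b, c⟩) {a : ℝ}
    (h : HasSum (fun b => ∑' c, f ⟨b, c⟩) a) : HasSum f a := by
  have hsum : Summable f := (summable_sigma_of_nonneg hf).2 ⟨hfib, h.summable⟩
  rw [h.unique (hsum.hasSum.sigma fun b => (hfib b).hasSum)]
  exact hsum.hasSum

theorem hasSum_of_hasSum_sum_antidiagonalTuple {k : ℕ} {f : (Fin k → ℕ) → ℝ}
    (hf : ∀ x, 0 ≤ f x) {a : ℝ}
    (h : HasSum (fun s => ∑ x ∈ Nat.antidiagonalTuple k s, f x) a) : HasSum f a := by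
  rw [← (Nat.sigmaAntidiagonalTupleEquivTuple k).hasSum_iff]
  refine hasSum_sigma_of_nonneg (fun _ => hf _) (fun s => (Finset.summable _ _)) ?_
  convert h using 2 with s
  exact Finset.tsum_subtype _ f

theorem hasSum_choose_div_factorial (i : ℕ) :
    HasSum (fun s : ℕ => (s.choose i : ℝ) / s.factorial) (Real.exp 1 / i.factorial) := by
  have hvanish : ∀ s ∉ Set.range (· + i), (s.choose i : ℝ) / s.factorial = 0 := by
    intro s hs
    have hsi : s < i := by
      by_contra hsi
      exact hs ⟨s - i, Nat.sub_add_cancel (not_lt.mp hsi)⟩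
    simp [Nat.choose_eq_zero_of_lt hsi]
  rw [← (add_left_injective i).hasSum_iff hvanish]
  have hexp := (NormedSpace.expSeries_div_hasSum_exp (1 : ℝ)).div_const (i.factorial : ℝ)
  rw [← Real.exp_eq_exp_ℝ] at hexp
  refine hexp.congr_fun fun t => ?_
  have hfact := Nat.add_choose_mul_factorial_mul_factorial t i
  simp only [Function.comp_apply, one_pow]
  field_simp
  exact_mod_cast hfact

theorem hasSum_add_choose_div_factorial (a m : ℕ) :
    HasSum (fun s : ℕ => ((s + a).choose m : ℝ) / s.factorial)
      (Real.exp 1 * ∑ ij ∈ antidiagonal m, (a.choose ij.1 : ℝ) / ij.2.factorial) := by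
  have hterm : ∀ s : ℕ, ((s + a).choose m : ℝ) / s.factorial =
      ∑ ij ∈ antidiagonal m, (a.choose ij.1 : ℝ) * ((s.choose ij.2 : ℝ) / s.factorial) := by
    intro s
    rw [add_comm, Nat.add_choose_eq, Nat.cast_sum, sum_div]
    push_cast
    simp only [mul_div_assoc]
  convert (hasSum_sum fun ij _ =>
    (hasSum_choose_div_factorial ij.2).mul_left (a.choose ij.1 : ℝ)).congr_fun hterm using 1
  rw [mul_sum]
  exact sum_congr rfl fun ij _ => by ring

theorem hasSum_prod_div_factorial_sum (k : ℕ) :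
    HasSum (fun n : Fin (k + 1) → ℕ => (∏ i, (n i : ℝ)) / (∑ i, n i).factorial)
      (Real.exp 1 * ∑ ij ∈ antidiagonal (2 * k + 1), (k.choose ij.1 : ℝ) / ij.2.factorial) := by
  refine hasSum_of_hasSum_sum_antidiagonalTuple (fun n => by positivity) ?_
  refine (hasSum_add_choose_div_factorial k (2 * k + 1)).congr_fun fun s => ?_
  rw [← Nat.sum_antidiagonalTuple_prod, Nat.cast_sum, sum_div]
  refine sum_congr rfl fun n hn => ?_
  rw [Nat.mem_antidiagonalTuple.mp hn, Nat.cast_prod]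

theorem hasSum_pnat_prod_div_factorial_sum (k : ℕ) :
    HasSum (fun n : Fin (k + 1) → ℕ+ => (∏ i, (n i : ℝ)) / (∑ i, (n i : ℕ)).factorial)
      (Real.exp 1 * ∑ ij ∈ antidiagonal (2 * k + 1), (k.choose ij.1 : ℝ) / ij.2.factorial) := by
  have hinj : Function.Injective fun (n : Fin (k + 1) → ℕ+) i => (n i : ℕ) :=
    fun n m h => funext fun i => PNat.coe_injective (congrFun h i)
  refine (hinj.hasSum_iff fun x hx => ?_).mpr (hasSum_prod_div_factorial_sum k)
  obtain ⟨i, hi⟩ : ∃ i, x i = 0 := by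
    by_contra! hpos
    exact hx ⟨fun i => ⟨x i, Nat.pos_of_ne_zero (hpos i)⟩, rfl⟩
  rw [prod_eq_zero (f := fun i => (x i : ℝ)) (mem_univ i) (by simp [hi]), zero_div]

theorem iteratedDeriv_pow_mul_exp (a m : ℕ) (x : ℝ) :
    iteratedDeriv m (fun x : ℝ => x ^ a * Real.exp x) x =
      ∑ i ∈ range (m + 1), m.choose i * a.descFactorial i * x ^ (a - i) * Real.exp x := by
  rw [iteratedDeriv_fun_mul (by fun_prop) (by fun_prop)]
  refine sum_congr rfl fun i _ => ?_
  rw [iteratedDeriv_eq_iterate (f := Real.exp), Real.iter_deriv_exp]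
  simp [mul_assoc]

theorem iteratedDeriv_pow_mul_exp_one_div_factorial (a m : ℕ) :
    1 / m.factorial * iteratedDeriv m (fun x : ℝ => x ^ a * Real.exp x) 1 =
      Real.exp 1 * ∑ ij ∈ antidiagonal m, (a.choose ij.1 : ℝ) / ij.2.factorial := by
  rw [iteratedDeriv_pow_mul_exp,
    Nat.sum_antidiagonal_eq_sum_range_succ fun i j => (a.choose i : ℝ) / j.factorial,
    mul_sum, mul_sum]
  refine sum_congr rfl fun i hi => ?_
  have him : i ≤ m := Nat.lt_succ_iff.mp (mem_range.mp hi)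
  have hfact : (m.choose i : ℝ) * i.factorial * (m - i).factorial = m.factorial := by
    exact_mod_cast Nat.choose_mul_factorial_mul_factorial him
  rw [Nat.descFactorial_eq_factorial_mul_choose]
  push_cast
  field_simp
  linear_combination (a.choose i : ℝ) * hfact

theorem stmt_19 (k : ℕ) (hk : 1 ≤ k) :
    ∑' n : Fin k → ℕ+,
        (∏ i, (n i : ℝ)) / (Nat.factorial (∑ i, (n i : ℕ)))
      = (1 / (Nat.factorial (2 * k - 1))) *
          iteratedDeriv (2 * k - 1) (fun x : ℝ => x ^ (k - 1) * Real.exp x) 1 := by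
  obtain ⟨k, rfl⟩ := Nat.exists_eq_add_of_le' hk
  rw [show 2 * (k + 1) - 1 = 2 * k + 1 by omega, Nat.add_sub_cancel,
    iteratedDeriv_pow_mul_exp_one_div_factorial]
  exact (hasSum_pnat_prod_div_factorial_sum k).tsum_eq
end
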